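/- Let q be a prime power and let r ≥ 3 and k ≥ 3 be integers. If either q is odd and r ≤ q, or q is even and r ≤ q + 1, then α_q(k,r) = r·q^{k−2} − C(r,2)·q^{k−3}, where C(r,2) is the binomial coefficient r choose 2. -/

import Mathlib

open scoped Classical
open Matrix

/-- The support of a word. -/
def wordSupp {F : Type} [Field F] {n : ℕ} (c : Fin n → F) : Set (Fin n) :=
  {i | c i ≠ 0}

/-- A nonzero codeword of `C` is minimal if no nonzero codeword of `C` has support
properly contained in its support. -/
def IsMinimalCodeword {F : Type} [Field F] {n : ℕ}
    (C : Submodule F (Fin n → F)) (c : Fin n → F) : Prop :=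
  c ∈ C ∧ c ≠ 0 ∧ ∀ c' ∈ C, c' ≠ 0 → ¬ wordSupp c' ⊂ wordSupp c

/-- The number of minimal codewords of `C`, counted up to equivalence (i.e. up to
multiplication by a nonzero scalar). -/
noncomputable def numMinimal {F : Type} [Field F] {n : ℕ}
    (C : Submodule F (Fin n → F)) : ℕ :=
  Nat.card (Quot (fun c c' : {c : Fin n → F // IsMinimalCodeword C c} =>
    ∃ a : Fˣ, a • c.1 = c'.1))

/-- A code is projective if no coordinate vanishes identically and no two distinct
coordinates agree up to a nonzero scalar factor on all of `C`. -/
def IsProjective {F : Type} [Field F] {n : ℕ} (C : Submodule F (Fin n → F)) : Prop :=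
  (∀ i : Fin n, ∃ c ∈ C, c i ≠ 0) ∧
  ∀ i j : Fin n, i ≠ j → ¬ ∃ a : F, a ≠ 0 ∧ ∀ c ∈ C, c j = a * c i

/-- `mMin F n k` : the minimum of `numMinimal C` over all projective `[n,k]` codes over `F`. -/
noncomputable def mMin (F : Type) [Field F] [Fintype F] (n k : ℕ) : ℕ :=
  sInf {m | ∃ C : Submodule F (Fin n → F),
    Module.finrank F C = k ∧ IsProjective C ∧ numMinimal C = m}

/-- `alphaQ F k r` : minimum cardinality of a set `S` of points (1-dimensional subspaces)
of `F^k` for which there are `r` distinct hyperplanes `H i` and codimension-2 subspaces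
`U i ≤ H i` such that every point lying on some `H i` but not on `U i` belongs to `S`. -/
noncomputable def alphaQ (F : Type) [Field F] [Fintype F] (k r : ℕ) : ℕ :=
  sInf {m | ∃ S : Set (Submodule F (Fin k → F)), S.ncard = m ∧
    ∃ H U : Fin r → Submodule F (Fin k → F),
      Function.Injective H ∧
      (∀ i, Module.finrank F (H i) = k - 1) ∧
      (∀ i, Module.finrank F (U i) = k - 2) ∧
      (∀ i, U i ≤ H i) ∧
      ∀ P : Submodule F (Fin k → F), Module.finrank F P = 1 →
        (∃ i, P ≤ H i ∧ ¬ P ≤ U i) → P ∈ S}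

/-- The minimum Hamming weight of a code. -/
noncomputable def minDist {F : Type} [Field F] {n : ℕ} (C : Submodule F (Fin n → F)) : ℕ :=
  sInf {w | ∃ c ∈ C, c ≠ 0 ∧ (wordSupp c).ncard = w}

/-- The support of a subcode. -/
def subcodeSupp {F : Type} [Field F] {n : ℕ} (D : Submodule F (Fin n → F)) : Set (Fin n) :=
  {i | ∃ v ∈ D, v i ≠ 0}

/-- An `l`-dimensional subcode `D` of `C` is support-minimal if no `l`-dimensional subcode
of `C` has support properly contained in `supp D`. -/
def IsSupportMinimal {F : Type} [Field F] {n : ℕ}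
    (C D : Submodule F (Fin n → F)) (l : ℕ) : Prop :=
  D ≤ C ∧ Module.finrank F D = l ∧
  ∀ D' : Submodule F (Fin n → F), D' ≤ C → Module.finrank F D' = l →
    ¬ subcodeSupp D' ⊂ subcodeSupp D

/-- The `l`-th generalized Hamming weight of `C`. -/
noncomputable def genWeight {F : Type} [Field F] {n : ℕ}
    (C : Submodule F (Fin n → F)) (l : ℕ) : ℕ :=
  sInf {w | ∃ D : Submodule F (Fin n → F), D ≤ C ∧ Module.finrank F D = l ∧
    (subcodeSupp D).ncard = w}

/-- The number of support-minimal `l`-dimensional subcodes of `C`. -/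
noncomputable def numSupportMinimal {F : Type} [Field F] {n : ℕ}
    (C : Submodule F (Fin n → F)) (l : ℕ) : ℕ :=
  Nat.card {D : Submodule F (Fin n → F) // IsSupportMinimal C D l}

/-- The Gaussian binomial coefficient `[k choose l]_q`. -/
def gaussBinom (q k l : ℕ) : ℕ :=
  (∏ i ∈ Finset.range l, (q ^ (k - i) - 1)) / (∏ i ∈ Finset.range l, (q ^ (i + 1) - 1))

/-- `alphaL F k l r` : the analogue of `alphaQ` for codimension `l`. -/
noncomputable def alphaL (F : Type) [Field F] [Fintype F] (k l r : ℕ) : ℕ :=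
  sInf {m | ∃ S : Set (Submodule F (Fin k → F)), S.ncard = m ∧
    ∃ W U : Fin r → Submodule F (Fin k → F),
      Function.Injective W ∧
      (∀ i, Module.finrank F (W i) = k - l) ∧
      (∀ i, Module.finrank F (U i) = k - (l + 1)) ∧
      (∀ i, U i ≤ W i) ∧
      ∀ P : Submodule F (Fin k → F), Module.finrank F P = 1 →
        (∃ i, P ≤ W i ∧ ¬ P ≤ U i) → P ∈ S}

/-!
Let `B i` be the set of points of `H i` not on `U i`. Each `B i` has `q^(k-2)` points, and two
of them share at most `q^(k-3)` points, since `U i ⊓ H j` has codimension at most one in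
`H i ⊓ H j`; Bonferroni's inequality bounds the union of the `B i` from below.

For the matching construction take `r ≤ q + 1` lines of the projective plane no three of which
are concurrent (the lines `a₁² x₀ + a₁a₂ x₁ + a₂² x₂ = 0`, whose dual coordinates lie on a
conic) and on each line a point lying on no other line, and pull them back along a projection
`F^k → F^3`. Now two of the `B i` meet in exactly `q^(k-3)` points and no three meet, so
inclusion–exclusion is exact.
-/

open Module
open scoped Finset

theorem Finset.set_ncard_biUnion {ι α : Type*} [Finite α] (s : Finset ι) {B : ι → Set α}
    (h : (s : Set ι).PairwiseDisjoint B) : (⋃ i ∈ s, B i).ncard = ∑ i ∈ s, (B i).ncard := by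
  rw [← finsum_mem_coe_finset, ← s.finite_toSet.ncard_biUnion (fun _ _ => Set.toFinite _) h]
  simp

section InclusionExclusion

variable {ι α : Type*} [DecidableEq ι] [Finite α] {A : ι → Set α} {a b : ℕ}

theorem ncard_biUnion_insert_add_ncard_inter (x : ι) (s : Finset ι) :
    (⋃ i ∈ insert x s, A i).ncard + (A x ∩ ⋃ i ∈ s, A i).ncard =
      (A x).ncard + (⋃ i ∈ s, A i).ncard := by
  rw [Finset.set_biUnion_insert]
  exact Set.ncard_union_add_ncard_inter _ _

theorem card_mul_le_ncard_biUnion_add (s : Finset ι) (hA : ∀ i ∈ s, (A i).ncard = a)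
    (hAA : ∀ i ∈ s, ∀ j ∈ s, i ≠ j → (A i ∩ A j).ncard ≤ b) :
    #s * a ≤ (⋃ i ∈ s, A i).ncard + (#s).choose 2 * b := by
  induction s using Finset.induction_on with
  | empty => simp
  | insert x s hx ih =>
    have hinter : (A x ∩ ⋃ i ∈ s, A i).ncard ≤ #s * b := by
      rw [Set.inter_iUnion₂, ← smul_eq_mul, ← Finset.sum_const]
      refine (Finset.set_ncard_biUnion_le s _).trans (Finset.sum_le_sum fun i hi => ?_)
      exact hAA x (s.mem_insert_self x) i (Finset.mem_insert_of_mem hi)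
        (ne_of_mem_of_not_mem hi hx).symm
    have hs := ih (fun i hi => hA i (Finset.mem_insert_of_mem hi))
      (fun i hi j hj => hAA i (Finset.mem_insert_of_mem hi) j (Finset.mem_insert_of_mem hj))
    have hunion := ncard_biUnion_insert_add_ncard_inter (A := A) x s
    rw [hA x (s.mem_insert_self x)] at hunion
    rw [Finset.card_insert_of_notMem hx, Nat.choose_succ_succ', Nat.choose_one_right]
    linarith

theorem ncard_biUnion_add_eq_card_mul (s : Finset ι) (hA : ∀ i ∈ s, (A i).ncard = a)
    (hAA : ∀ i ∈ s, ∀ j ∈ s, i ≠ j → (A i ∩ A j).ncard = b)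
    (hAAA : ∀ i ∈ s, ∀ j ∈ s, ∀ l ∈ s, i ≠ j → i ≠ l → j ≠ l → A i ∩ A j ∩ A l = ∅) :
    (⋃ i ∈ s, A i).ncard + (#s).choose 2 * b = #s * a := by
  induction s using Finset.induction_on with
  | empty => simp
  | insert x s hx ih =>
    have hne : ∀ i ∈ s, x ≠ i := fun i hi => (ne_of_mem_of_not_mem hi hx).symm
    have hinter : (A x ∩ ⋃ i ∈ s, A i).ncard = #s * b := by
      rw [Set.inter_iUnion₂, Finset.set_ncard_biUnion, ← smul_eq_mul, ← Finset.sum_const]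
      · exact Finset.sum_congr rfl fun i hi =>
          hAA x (s.mem_insert_self x) i (Finset.mem_insert_of_mem hi) (hne i hi)
      · refine fun i hi j hj hij => Set.disjoint_left.2 fun y hyi hyj => ?_
        exact Set.eq_empty_iff_forall_notMem.1 (hAAA x (s.mem_insert_self x) i
          (Finset.mem_insert_of_mem hi) j (Finset.mem_insert_of_mem hj) (hne i hi) (hne j hj) hij)
          y ⟨hyi, hyj.2⟩
    have hs := ih (fun i hi => hA i (Finset.mem_insert_of_mem hi))
      (fun i hi j hj => hAA i (Finset.mem_insert_of_mem hi) j (Finset.mem_insert_of_mem hj))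
      (fun i hi j hj l hl => hAAA i (Finset.mem_insert_of_mem hi) j (Finset.mem_insert_of_mem hj)
        l (Finset.mem_insert_of_mem hl))
    have hunion := ncard_biUnion_insert_add_ncard_inter (A := A) x s
    rw [hA x (s.mem_insert_self x)] at hunion
    rw [Finset.card_insert_of_notMem hx, Nat.choose_succ_succ', Nat.choose_one_right]
    linarith

end InclusionExclusion

section Points

variable {F V : Type*} [Field F] [AddCommGroup V] [Module F V]

def projPoints (W : Submodule F V) : Set (Submodule F V) :=
  {P | finrank F P = 1 ∧ P ≤ W}

theorem projPoints_mono {U W : Submodule F V} (h : U ≤ W) : projPoints U ⊆ projPoints W :=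
  fun _ hP => ⟨hP.1, hP.2.trans h⟩

theorem projPoints_eq_image (W : Submodule F V) :
    projPoints W = Submodule.map W.subtype '' {P : Submodule F W | finrank F P = 1} := by
  ext P
  constructor
  · rintro ⟨hP, hPW⟩
    refine ⟨P.comap W.subtype, ?_, by rw [Submodule.map_comap_subtype, inf_eq_right.2 hPW]⟩
    show finrank F _ = 1
    rwa [← Submodule.finrank_map_subtype_eq, Submodule.map_comap_subtype, inf_eq_right.2 hPW]
  · rintro ⟨Q, hQ, rfl⟩
    exact ⟨(Submodule.finrank_map_subtype_eq W Q).trans hQ, Submodule.map_subtype_le W Q⟩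

variable [Finite F]

theorem ncard_projPoints (W : Submodule F V) :
    (projPoints W).ncard = ∑ i ∈ Finset.range (finrank F W), Nat.card F ^ i := by
  rw [projPoints_eq_image, Set.ncard_image_of_injective _
    (Submodule.map_injective_of_injective W.injective_subtype), ← Nat.card_coe_set_eq,
    ← Projectivization.card_of_finrank F W rfl]
  exact Nat.card_congr (Projectivization.equivSubmodule F W).symm

variable [Finite V]

theorem ncard_projPoints_diff {U W : Submodule F V} {n : ℕ} (hUW : U ≤ W)
    (hW : finrank F W = n + 1) (hU : finrank F U = n) :
    (projPoints W \ projPoints U).ncard = Nat.card F ^ n := by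
  rw [Set.ncard_sdiff (projPoints_mono hUW), ncard_projPoints, ncard_projPoints, hW, hU,
    Finset.sum_range_succ, Nat.add_sub_cancel_left]

theorem ncard_projPoints_diff_le {U W : Submodule F V} {n : ℕ} (hUW : U ≤ W)
    (hW : finrank F W = n + 1) (hU : n ≤ finrank F U) :
    (projPoints W \ projPoints U).ncard ≤ Nat.card F ^ n := by
  have hsum : ∑ i ∈ Finset.range n, Nat.card F ^ i ≤ (projPoints U).ncard := by
    rw [ncard_projPoints]
    exact Finset.sum_le_sum_of_subset (Finset.range_mono hU)
  rw [Set.ncard_sdiff (projPoints_mono hUW), ncard_projPoints W, hW, Finset.sum_range_succ]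
  omega

end Points

theorem finrank_inf_of_ne {F V : Type*} [Field F] [AddCommGroup V] [Module F V]
    [FiniteDimensional F V] {A B : Submodule F V} {m : ℕ} (hV : finrank F V = m + 2)
    (hA : finrank F A = m + 1) (hB : finrank F B = m + 1) (hAB : A ≠ B) :
    finrank F ↥(A ⊓ B) = m := by
  have hlt : A < A ⊔ B := by
    refine lt_of_le_of_ne le_sup_left fun h => hAB ?_
    exact (Submodule.eq_of_le_of_finrank_eq (h ▸ le_sup_right) (hB.trans hA.symm)).symm
  have := Submodule.finrank_lt_finrank_of_lt hlt
  have := Submodule.finrank_le (A ⊔ B)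
  have := Submodule.finrank_sup_add_finrank_inf_eq A B
  omega

theorem finrank_comap_of_surjective {F V W : Type*} [Field F] [AddCommGroup V] [Module F V]
    [FiniteDimensional F V] [AddCommGroup W] [Module F W] {π : V →ₗ[F] W}
    (hπ : Function.Surjective π) (X : Submodule F W) :
    finrank F (X.comap π) = finrank F (LinearMap.ker π) + finrank F X := by
  have hker : LinearMap.ker π ≤ X.comap π := LinearMap.ker_le_comap π
  have := LinearMap.finrank_range_add_finrank_ker (π.domRestrict (X.comap π))
  rwa [LinearMap.range_domRestrict, Submodule.map_comap_eq_of_surjective hπ,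
    LinearMap.ker_domRestrict, (Submodule.comapSubtypeEquivOfLe hker).finrank_eq, eq_comm,
    add_comm] at this

section Covering

variable {F V ι : Type*} [Field F] [AddCommGroup V] [Module F V]

def coveredPoints (H U : ι → Submodule F V) : Set (Submodule F V) :=
  ⋃ i, projPoints (H i) \ projPoints (U i)

theorem coveredPoints_subset_iff {H U : ι → Submodule F V} {S : Set (Submodule F V)} :
    coveredPoints H U ⊆ S ↔
      ∀ P : Submodule F V, finrank F P = 1 → (∃ i, P ≤ H i ∧ ¬ P ≤ U i) → P ∈ S := by
  refine ⟨fun h P hP ⟨i, hPH, hPU⟩ => h (Set.mem_iUnion.2 ⟨i, ⟨hP, hPH⟩, fun h' => hPU h'.2⟩),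
    fun h P hP => ?_⟩
  obtain ⟨i, ⟨hP, hPH⟩, hPU⟩ := Set.mem_iUnion.1 hP
  exact h P hP ⟨i, hPH, fun h' => hPU ⟨hP, h'⟩⟩

theorem projPoints_diff_inter_subset (H U H' U' : Submodule F V) :
    (projPoints H \ projPoints U) ∩ (projPoints H' \ projPoints U') ⊆
      projPoints (H ⊓ H') \ projPoints (U ⊓ H') :=
  fun _ ⟨⟨hH, hU⟩, hH', _⟩ => ⟨⟨hH.1, le_inf hH.2 hH'.2⟩,
    fun hP => hU ⟨hP.1, hP.2.trans inf_le_left⟩⟩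

theorem projPoints_diff_inter_eq {H U H' U' : Submodule F V} (h : U ⊓ H' = U' ⊓ H) :
    (projPoints H \ projPoints U) ∩ (projPoints H' \ projPoints U') =
      projPoints (H ⊓ H') \ projPoints (U ⊓ H') := by
  refine (projPoints_diff_inter_subset H U H' U').antisymm fun P ⟨⟨hP, hPH⟩, hPK⟩ => ?_
  have hPH₁ := hPH.trans inf_le_left
  have hPH₂ := hPH.trans inf_le_right
  exact ⟨⟨⟨hP, hPH₁⟩, fun hPU => hPK ⟨hP, le_inf hPU.2 hPH₂⟩⟩,
    ⟨hP, hPH₂⟩, fun hPU => hPK ⟨hP, h ▸ le_inf hPU.2 hPH₁⟩⟩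

end Covering

theorem card_mul_sub_le_ncard_coveredPoints {F V ι : Type*} [Field F] [Finite F] [AddCommGroup V]
    [Module F V] [Finite V] [Fintype ι] [DecidableEq ι] {n : ℕ} (hV : finrank F V = n + 3)
    {H U : ι → Submodule F V} (hHinj : Function.Injective H)
    (hH : ∀ i, finrank F (H i) = n + 2) (hU : ∀ i, finrank F (U i) = n + 1)
    (hUH : ∀ i, U i ≤ H i) :
    Fintype.card ι * Nat.card F ^ (n + 1) - (Fintype.card ι).choose 2 * Nat.card F ^ n ≤
      (coveredPoints H U).ncard := by
  have hpair : ∀ i j, i ≠ j → ((projPoints (H i) \ projPoints (U i)) ∩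
      (projPoints (H j) \ projPoints (U j))).ncard ≤ Nat.card F ^ n := by
    intro i j hij
    have hdim := Submodule.finrank_sup_add_finrank_inf_eq (U i) (H j)
    have := Submodule.finrank_le (U i ⊔ H j)
    refine (Set.ncard_le_ncard (projPoints_diff_inter_subset _ _ _ _)).trans
      (ncard_projPoints_diff_le (inf_le_inf_right _ (hUH i)) ?_ ?_)
    · exact finrank_inf_of_ne hV (hH i) (hH j) (hHinj.ne hij)
    · rw [hU, hH] at hdim
      omega
  have := card_mul_le_ncard_biUnion_add Finset.univ
    (fun i _ => ncard_projPoints_diff (hUH i) (hH i) (hU i))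
    (fun i _ j _ hij => hpair i j hij)
  simp only [Finset.card_univ, Finset.mem_univ, Set.iUnion_true] at this
  exact Nat.sub_le_of_le_add this

section ConicLines

variable {F : Type*} [Field F] {a b c : F × F}

/-- Dual coordinates of `conicLine a`; they run over the conic `y₀ y₂ = y₁²`, so that no three
of the lines `conicLine a` (for pairwise non-proportional `a`) are concurrent. -/
def conicLineCoord (a : F × F) : Fin 3 → F := ![a.1 ^ 2, a.1 * a.2, a.2 ^ 2]

def conicLine (a : F × F) : Submodule F (Fin 3 → F) :=
  LinearMap.ker (dotProductEquiv F (Fin 3) (conicLineCoord a))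

def conicLinePoint (a : F × F) : Fin 3 → F := ![a.2 ^ 2, -(2 * a.1 * a.2), a.1 ^ 2]

def conicLinesMeet (a b : F × F) : Fin 3 → F :=
  ![a.2 * b.2, -(a.1 * b.2 + a.2 * b.1), a.1 * b.1]

theorem mem_conicLine {x : Fin 3 → F} : x ∈ conicLine a ↔ conicLineCoord a ⬝ᵥ x = 0 :=
  Iff.rfl

theorem conicLineCoord_dotProduct_conicLinePoint (a b : F × F) :
    conicLineCoord b ⬝ᵥ conicLinePoint a = (a.1 * b.2 - a.2 * b.1) ^ 2 := by
  simp only [conicLineCoord, conicLinePoint, dotProduct, Fin.sum_univ_three, cons_val_zero,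
    cons_val_one, cons_val_two, head_cons, tail_cons]
  ring

theorem conicLineCoord_dotProduct_conicLinesMeet (a b c : F × F) :
    conicLineCoord c ⬝ᵥ conicLinesMeet a b =
      (c.1 * a.2 - c.2 * a.1) * (c.1 * b.2 - c.2 * b.1) := by
  simp only [conicLineCoord, conicLinesMeet, dotProduct, Fin.sum_univ_three, cons_val_zero,
    cons_val_one, cons_val_two, head_cons, tail_cons]
  ring

theorem conicLinePoint_mem_conicLine (a : F × F) : conicLinePoint a ∈ conicLine a := by
  rw [mem_conicLine, conicLineCoord_dotProduct_conicLinePoint, sub_eq_zero_of_eq (mul_comm _ _),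
    zero_pow two_ne_zero]

theorem conicLinePoint_notMem_conicLine (h : a.1 * b.2 - a.2 * b.1 ≠ 0) :
    conicLinePoint a ∉ conicLine b := by
  rw [mem_conicLine, conicLineCoord_dotProduct_conicLinePoint]
  exact pow_ne_zero 2 h

theorem conicLinesMeet_mem_inf (a b : F × F) :
    conicLinesMeet a b ∈ conicLine a ⊓ conicLine b := by
  simp only [Submodule.mem_inf, mem_conicLine, conicLineCoord_dotProduct_conicLinesMeet]
  constructor <;> ring

theorem conicLinesMeet_notMem_conicLine (ha : c.1 * a.2 - c.2 * a.1 ≠ 0)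
    (hb : c.1 * b.2 - c.2 * b.1 ≠ 0) : conicLinesMeet a b ∉ conicLine c := by
  rw [mem_conicLine, conicLineCoord_dotProduct_conicLinesMeet]
  exact mul_ne_zero ha hb

theorem conicLinePoint_ne_zero (ha : a ≠ 0) : conicLinePoint a ≠ 0 := by
  intro h
  have h0 : a.2 ^ 2 = 0 := congrFun h 0
  have h2 : a.1 ^ 2 = 0 := congrFun h 2
  exact ha (Prod.ext (eq_zero_of_pow_eq_zero h2) (eq_zero_of_pow_eq_zero h0))

theorem finrank_conicLine (ha : a ≠ 0) : finrank F (conicLine a) = 2 := by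
  have hcoord : conicLineCoord a ≠ 0 := by
    intro h
    have h0 : a.1 ^ 2 = 0 := congrFun h 0
    have h2 : a.2 ^ 2 = 0 := congrFun h 2
    exact ha (Prod.ext (eq_zero_of_pow_eq_zero h0) (eq_zero_of_pow_eq_zero h2))
  have := Module.Dual.finrank_ker_add_one_of_ne_zero
    ((LinearEquiv.map_ne_zero_iff (dotProductEquiv F (Fin 3))).2 hcoord)
  rw [Module.finrank_fin_fun] at this
  exact Nat.succ_injective this

theorem conicLine_ne (h : a.1 * b.2 - a.2 * b.1 ≠ 0) : conicLine a ≠ conicLine b :=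
  fun e => conicLinePoint_notMem_conicLine h (e ▸ conicLinePoint_mem_conicLine a)

theorem span_conicLinePoint_inf_conicLine (ha : a ≠ 0) (h : a.1 * b.2 - a.2 * b.1 ≠ 0) :
    Submodule.span F {conicLinePoint a} ⊓ conicLine b = ⊥ := by
  rw [inf_comm, ← disjoint_iff, Submodule.disjoint_span_singleton' (conicLinePoint_ne_zero ha)]
  exact conicLinePoint_notMem_conicLine h

theorem finrank_conicLine_inf (ha : a ≠ 0) (hb : b ≠ 0) (h : a.1 * b.2 - a.2 * b.1 ≠ 0) :
    finrank F ↥(conicLine a ⊓ conicLine b) = 1 :=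
  finrank_inf_of_ne (Module.finrank_fin_fun F) (finrank_conicLine ha) (finrank_conicLine hb)
    (conicLine_ne h)

theorem conicLine_inf_inf_eq_bot (ha : a ≠ 0) (hb : b ≠ 0) (hab : a.1 * b.2 - a.2 * b.1 ≠ 0)
    (hca : c.1 * a.2 - c.2 * a.1 ≠ 0) (hcb : c.1 * b.2 - c.2 * b.1 ≠ 0) :
    conicLine a ⊓ conicLine b ⊓ conicLine c = ⊥ := by
  have hmeet := conicLinesMeet_notMem_conicLine hca hcb
  have hmeet0 : conicLinesMeet a b ≠ 0 := fun h => hmeet (h ▸ zero_mem _)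
  have hspan : Submodule.span F {conicLinesMeet a b} = conicLine a ⊓ conicLine b := by
    refine Submodule.eq_of_le_of_finrank_eq ?_ ?_
    · exact (Submodule.span_singleton_le_iff_mem _ _).2 (conicLinesMeet_mem_inf a b)
    · rw [finrank_span_singleton hmeet0, finrank_conicLine_inf ha hb hab]
  rw [← hspan, inf_comm, ← disjoint_iff, Submodule.disjoint_span_singleton' hmeet0]
  exact hmeet

/-- The parameters are the `q + 1` points `(1 : t)`, `(0 : 1)` of the projective line. -/
theorem exists_conicLine_params {ι : Type*} [Finite ι] [Finite F]
    (h : Nat.card ι ≤ Nat.card F + 1) :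
    ∃ a : ι → F × F, (∀ i, a i ≠ 0) ∧
      ∀ i j, i ≠ j → (a i).1 * (a j).2 - (a i).2 * (a j).1 ≠ 0 := by
  have := Fintype.ofFinite ι
  have := Fintype.ofFinite F
  obtain ⟨τ⟩ : Nonempty (ι ↪ Option F) := Function.Embedding.nonempty_of_card_le (by
    simpa [Nat.card_eq_fintype_card] using h)
  let p : Option F → F × F := fun o => o.elim (0, 1) ((1, ·))
  have hp : ∀ o, p o ≠ 0 := by rintro (_ | t) <;> simp [p]
  have hdet : ∀ o o', o ≠ o' → (p o).1 * (p o').2 - (p o).2 * (p o').1 ≠ 0 := by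
    rintro (_ | t) (_ | s) h <;> simp_all [p, sub_eq_zero, eq_comm]
  exact ⟨p ∘ τ, fun i => hp _, fun i j hij => hdet _ _ (τ.injective.ne hij)⟩

end ConicLines

section LiftedConicLines

variable {F V : Type*} [Field F] [AddCommGroup V] [Module F V] {π : V →ₗ[F] Fin 3 → F}
  {a b : F × F}

theorem comap_span_conicLinePoint_le_comap_conicLine (a : F × F) :
    (Submodule.span F {conicLinePoint a}).comap π ≤ (conicLine a).comap π :=
  Submodule.comap_mono <| (Submodule.span_singleton_le_iff_mem _ _).2
    (conicLinePoint_mem_conicLine a)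

theorem comap_span_conicLinePoint_inf_comap_conicLine (ha : a ≠ 0)
    (h : a.1 * b.2 - a.2 * b.1 ≠ 0) :
    (Submodule.span F {conicLinePoint a}).comap π ⊓ (conicLine b).comap π = LinearMap.ker π := by
  rw [← Submodule.comap_inf, span_conicLinePoint_inf_conicLine ha h, Submodule.comap_bot]

variable [FiniteDimensional F V]

theorem finrank_comap_conicLine (hπ : Function.Surjective π) (ha : a ≠ 0) :
    finrank F ((conicLine a).comap π) = finrank F (LinearMap.ker π) + 2 := by
  rw [finrank_comap_of_surjective hπ, finrank_conicLine ha]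

theorem finrank_comap_span_conicLinePoint (hπ : Function.Surjective π) (ha : a ≠ 0) :
    finrank F ((Submodule.span F {conicLinePoint a}).comap π) =
      finrank F (LinearMap.ker π) + 1 := by
  rw [finrank_comap_of_surjective hπ, finrank_span_singleton (conicLinePoint_ne_zero ha)]

end LiftedConicLines

section Construction

variable {F V ι : Type*} [Field F] [Finite F] [AddCommGroup V] [Module F V] [Finite V]
  [Fintype ι] [DecidableEq ι] {π : V →ₗ[F] Fin 3 → F}

theorem ncard_coveredPoints_comap_conicLine (hπ : Function.Surjective π) {a : ι → F × F}
    (ha : ∀ i, a i ≠ 0) (hdet : ∀ i j, i ≠ j → (a i).1 * (a j).2 - (a i).2 * (a j).1 ≠ 0) :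
    (coveredPoints (fun i => (conicLine (a i)).comap π)
        (fun i => (Submodule.span F {conicLinePoint (a i)}).comap π)).ncard +
      (Fintype.card ι).choose 2 * Nat.card F ^ finrank F (LinearMap.ker π) =
        Fintype.card ι * Nat.card F ^ (finrank F (LinearMap.ker π) + 1) := by
  set H : ι → Submodule F V := fun i => (conicLine (a i)).comap π
  set U : ι → Submodule F V := fun i => (Submodule.span F {conicLinePoint (a i)}).comap π
  set B : ι → Set (Submodule F V) := fun i => projPoints (H i) \ projPoints (U i)
  have hUH : ∀ i j, i ≠ j → U i ⊓ H j = LinearMap.ker π := fun i j hij =>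
    comap_span_conicLinePoint_inf_comap_conicLine (ha i) (hdet i j hij)
  have hpair : ∀ i j, i ≠ j → B i ∩ B j = projPoints (H i ⊓ H j) \ projPoints (LinearMap.ker π) :=
    fun i j hij => by
      rw [projPoints_diff_inter_eq ((hUH i j hij).trans (hUH j i hij.symm).symm), hUH i j hij]
  have hpair_card : ∀ i j, i ≠ j → (B i ∩ B j).ncard = Nat.card F ^ finrank F (LinearMap.ker π) :=
    fun i j hij => by
      rw [hpair i j hij]
      refine ncard_projPoints_diff ((hUH i j hij).symm.le.trans
        (inf_le_inf_right _ (comap_span_conicLinePoint_le_comap_conicLine _))) ?_ rfl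
      rw [← Submodule.comap_inf, finrank_comap_of_surjective hπ,
        finrank_conicLine_inf (ha i) (ha j) (hdet i j hij)]
  have htriple : ∀ i j l, i ≠ j → i ≠ l → j ≠ l → B i ∩ B j ∩ B l = ∅ := by
    intro i j l hij hil hjl
    rw [hpair i j hij, Set.eq_empty_iff_forall_notMem]
    rintro P ⟨⟨⟨hP, hPij⟩, hPker⟩, ⟨-, hPl⟩, -⟩
    refine hPker ⟨hP, (le_inf hPij hPl).trans_eq ?_⟩
    rw [← Submodule.comap_inf, ← Submodule.comap_inf, conicLine_inf_inf_eq_bot (ha i) (ha j)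
      (hdet i j hij) (hdet l i hil.symm) (hdet l j hjl.symm), Submodule.comap_bot]
  have := ncard_biUnion_add_eq_card_mul Finset.univ
    (fun i _ => ncard_projPoints_diff (comap_span_conicLinePoint_le_comap_conicLine _)
      (finrank_comap_conicLine hπ (ha i)) (finrank_comap_span_conicLinePoint hπ (ha i)))
    (fun i _ j _ hij => hpair_card i j hij) (fun i _ j _ l _ => htriple i j l)
  simp only [Finset.card_univ, Finset.mem_univ, Set.iUnion_true] at this
  exact this

theorem exists_hyperplanes_ncard_coveredPoints {n : ℕ} (hι : Fintype.card ι ≤ Nat.card F + 1)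
    (hV : finrank F V = n + 3) (hπ : Function.Surjective π) :
    ∃ H U : ι → Submodule F V, Function.Injective H ∧ (∀ i, finrank F (H i) = n + 2) ∧
      (∀ i, finrank F (U i) = n + 1) ∧ (∀ i, U i ≤ H i) ∧
      (coveredPoints H U).ncard + (Fintype.card ι).choose 2 * Nat.card F ^ n =
        Fintype.card ι * Nat.card F ^ (n + 1) := by
  obtain ⟨a, ha, hdet⟩ := exists_conicLine_params (ι := ι) (F := F)
    (by rwa [Nat.card_eq_fintype_card])
  have hker : finrank F (LinearMap.ker π) = n := by
    have := LinearMap.finrank_range_add_finrank_ker π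
    rw [LinearMap.range_eq_top.2 hπ, finrank_top, Module.finrank_fin_fun, hV] at this
    omega
  refine ⟨_, _, fun i j hij => ?_, fun i => ?_, fun i => ?_,
    fun i => comap_span_conicLinePoint_le_comap_conicLine _,
    hker ▸ ncard_coveredPoints_comap_conicLine hπ ha hdet⟩
  · by_contra hne
    exact conicLine_ne (hdet i j hne) (Submodule.comap_injective_of_surjective hπ hij)
  · rw [finrank_comap_conicLine hπ (ha i), hker]
  · rw [finrank_comap_span_conicLinePoint hπ (ha i), hker]

end Construction

theorem statement_8_general {F : Type} [Field F] [Fintype F] {q k r : ℕ}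
    (hq : Fintype.card F = q) (hk : 3 ≤ k)
    (hcond : (Odd q ∧ r ≤ q) ∨ (Even q ∧ r ≤ q + 1)) :
    alphaQ F k r = r * q ^ (k - 2) - r.choose 2 * q ^ (k - 3) := by
  obtain ⟨n, rfl⟩ : ∃ n, k = n + 3 := ⟨k - 3, by omega⟩
  rw [show n + 3 - 2 = n + 1 by omega, show n + 3 - 3 = n by omega]
  rw [← hq, ← Nat.card_eq_fintype_card] at hcond ⊢
  have hr : Fintype.card (Fin r) ≤ Nat.card F + 1 := by
    rw [Fintype.card_fin]
    rcases hcond with ⟨-, h⟩ | ⟨-, h⟩ <;> omega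
  have hV : finrank F (Fin (n + 3) → F) = n + 3 := Module.finrank_fin_fun F
  obtain ⟨H, U, hHinj, hH, hU, hUH, hcard⟩ := exists_hyperplanes_ncard_coveredPoints hr hV
    (LinearMap.funLeft_surjective_of_injective F F _ (Fin.castLE_injective (by omega)))
  rw [Fintype.card_fin] at hcard
  refine IsLeast.csInf_eq ⟨⟨coveredPoints H U, by omega, H, U, hHinj, hH, hU, hUH,
    coveredPoints_subset_iff.1 subset_rfl⟩, ?_⟩
  rintro m ⟨S, rfl, H', U', hHinj', hH', hU', hUH', hS⟩
  have hlower := card_mul_sub_le_ncard_coveredPoints hV hHinj' hH' hU' hUH'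
  rw [Fintype.card_fin] at hlower
  exact hlower.trans (Set.ncard_le_ncard (coveredPoints_subset_iff.2 hS))

/-- for a prime power `q` and integers `r ≥ 3`, `k ≥ 3`, if `q` is odd and
`r ≤ q`, or `q` is even and `r ≤ q + 1`, then
`α_q(k,r) = r·q^(k-2) - C(r,2)·q^(k-3)`. -/
theorem statement_8 {F : Type} [Field F] [Fintype F] {q k r : ℕ}
    (hq : Fintype.card F = q) (hk : 3 ≤ k) (hr : 3 ≤ r)
    (hcond : (Odd q ∧ r ≤ q) ∨ (Even q ∧ r ≤ q + 1)) :
    alphaQ F k r = r * q ^ (k - 2) - r.choose 2 * q ^ (k - 3) :=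
  statement_8_general hq hk hcond
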